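/- Let Enc(S) denote the IBLT obtained by starting from the all-zero table and applying Update once for each key-value-tag triple in a finite set S (with a fixed tag function t = ρ(k,v)). Then for any two finite sets S1, S2 of key-value pairs, Combine(Enc(S1), Enc(S2)) = Enc(S1 Δ S2), the encoding of the symmetric difference of S1 and S2. In particular, if S1 = S2 the result is the all-zero IBLT, and if S1 and S2 are disjoint the result is Enc(S1 ∪ S2). -/
import Mathlib


/-- Contribution of a single key-value pair `p` (with tag `ρ p`) to an IBLT:
it is XORed into each cell `i` once per hash function hitting `i`. -/
def insTable {K V G : Type*} [AddCommGroup K] [AddCommGroup V] [AddCommGroup G]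
    {m q : ℕ} (h : Fin q → K → Fin m) (ρ : K × V → G) (p : K × V) :
    Fin m → K × V × G :=
  fun i => (Finset.univ.filter (fun j : Fin q => h j p.1 = i)).card •
    ((p.1, p.2, ρ p) : K × V × G)

/-- `enc h ρ S` is the IBLT obtained by starting from the all-zero table and
XOR-inserting each key-value pair of `S` (with tag given by `ρ`). -/
def enc {K V G : Type*} [AddCommGroup K] [AddCommGroup V] [AddCommGroup G]
    {m q : ℕ} (h : Fin q → K → Fin m) (ρ : K × V → G) (S : Finset (K × V)) :
    Fin m → K × V × G :=
  fun i => ∑ p ∈ S, insTable h ρ p i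

/-- Cellwise XOR of two IBLTs. -/
def combine {C : Type*} [AddCommGroup C] {m : ℕ} (T1 T2 : Fin m → C) : Fin m → C :=
  fun i => T1 i + T2 i

lemma sum_add_sum_eq_sum_symmDiff {α C : Type*} [DecidableEq α] [AddCommGroup C]
    (hC : ∀ x : C, x + x = 0) (f : α → C) (S1 S2 : Finset α) :
    (∑ p ∈ S1, f p) + ∑ p ∈ S2, f p = ∑ p ∈ symmDiff S1 S2, f p := by
  have h1 : (∑ p ∈ S1 ∪ S2, f p) + ∑ p ∈ S1 ∩ S2, f p
      = (∑ p ∈ S1, f p) + ∑ p ∈ S2, f p := Finset.sum_union_inter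
  have hsub : S1 ∩ S2 ⊆ S1 ∪ S2 := (Finset.inter_subset_left).trans Finset.subset_union_left
  have h2 : ∑ p ∈ S1 ∪ S2, f p
      = (∑ p ∈ (S1 ∪ S2) \ (S1 ∩ S2), f p) + ∑ p ∈ S1 ∩ S2, f p :=
    (Finset.sum_sdiff hsub).symm
  have hsd : symmDiff S1 S2 = (S1 ∪ S2) \ (S1 ∩ S2) := by
    ext x; simp [symmDiff, Finset.mem_union, Finset.mem_inter]; tauto
  rw [← h1, h2, hsd, add_assoc, hC, add_zero]

/-- `Combine(Enc(S1), Enc(S2)) = Enc(S1 Δ S2)`: combining the encodings of two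
finite sets yields the encoding of their symmetric difference.  In particular,
if `S1 = S2` the result is the all-zero IBLT, and if `S1` and `S2` are disjoint
the result is `Enc(S1 ∪ S2)`. -/
theorem combine_enc_eq_enc_symmDiff {K V G : Type*}
    [AddCommGroup K] [AddCommGroup V] [AddCommGroup G] [DecidableEq (K × V)]
    (hK : ∀ x : K, x + x = 0) (hV : ∀ x : V, x + x = 0) (hG : ∀ x : G, x + x = 0)
    {m q : ℕ} (h : Fin q → K → Fin m) (ρ : K × V → G) (S1 S2 : Finset (K × V)) :
    combine (enc h ρ S1) (enc h ρ S2) = enc h ρ (symmDiff S1 S2) ∧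
    (S1 = S2 → combine (enc h ρ S1) (enc h ρ S2) = fun _ => 0) ∧
    (Disjoint S1 S2 → combine (enc h ρ S1) (enc h ρ S2) = enc h ρ (S1 ∪ S2)) := by
  
  have hC : ∀ x : K × V × G, x + x = 0 := by
    rintro ⟨a, b, c⟩
    exact Prod.ext (hK a) (Prod.ext (hV b) (hG c))
  have main : combine (enc h ρ S1) (enc h ρ S2) = enc h ρ (symmDiff S1 S2) := by
    funext i
    exact sum_add_sum_eq_sum_symmDiff hC (fun p => insTable h ρ p i) S1 S2
  refine ⟨main, ?_, ?_⟩
  · rintro rfl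
    rw [main, symmDiff_self]
    funext i
    simp [enc]
  · intro hd
    rw [main, hd.symmDiff_eq_sup]; rfl
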